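/- arXiv:2401.07493 — 3 statements merged into one kernel-verified Lean document; each statement's English description precedes it below -/
import Mathlib

section
/- Let h > 0, let η ∈ ℕ, let a₀, a₁, …, a_η ∈ ℝ be pairwise distinct centers, and let U₀, U₁, …, U_η ∈ ℝ be prescribed values. Then there exists a unique polynomial p of degree at most η such that (1/h)·∫_{a_i − h/2}^{a_i + h/2} p(ξ) dξ = U_i for every i = 0, 1, …, η. -/
/-!
Box averages are linear in `p`, and polynomials of degree at most `η` form a space of dimension
`η + 1`, so it suffices to show that a polynomial `p` whose box integrals all vanish is zero.
For an antiderivative `A` of `p`, the polynomial `A(x + h/2) - A(x - h/2)` has lower degree than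
`A`, hence degree at most `η`, and vanishes at the `η + 1` centers; so it is zero. Then `A` is
`h`-periodic, hence constant, and `p = A' = 0`.
-/

open Polynomial

namespace Polynomial

section Antiderivative

variable {R : Type*} [Field R] [CharZero R]

noncomputable def antideriv (p : R[X]) : R[X] :=
  p.sum fun n c => monomial (n + 1) (c / (n + 1))

theorem derivative_antideriv (p : R[X]) : derivative p.antideriv = p := by
  conv_rhs => rw [← p.sum_monomial_eq]
  simp only [antideriv, Polynomial.sum, map_sum, derivative_monomial]
  refine Finset.sum_congr rfl fun n _ => ?_
  rw [Nat.add_sub_cancel, Nat.cast_add_one, div_mul_cancel₀ _ (Nat.cast_add_one_ne_zero n)]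

end Antiderivative

theorem integral_eval (p : ℝ[X]) (u v : ℝ) :
    ∫ x in u..v, p.eval x = p.antideriv.eval v - p.antideriv.eval u := by
  refine intervalIntegral.integral_eq_sub_of_hasDerivAt (f := fun x => p.antideriv.eval x)
    (fun x _ => ?_) (p.continuous.intervalIntegrable u v)
  simpa only [derivative_antideriv] using p.antideriv.hasDerivAt x

theorem natDegree_taylor_sub_taylor_lt {R : Type*} [CommRing R] {p : R[X]} (hp : p.natDegree ≠ 0)
    (r s : R) : (taylor r p - taylor s p).natDegree < p.natDegree := by
  have hp0 : p ≠ 0 := by rintro rfl; exact hp natDegree_zero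
  by_cases hq : taylor r p - taylor s p = 0
  · rw [hq, natDegree_zero]; exact Nat.pos_of_ne_zero hp
  rw [← natDegree_taylor p r]
  refine natDegree_lt_natDegree hq (degree_sub_lt_left ?_ ?_ ?_)
  · rw [degree_taylor, degree_taylor]
  · rwa [Ne, taylor_eq_zero]
  · rw [leadingCoeff_taylor, leadingCoeff_taylor]

theorem eq_C_eval_zero_of_taylor_eq_self {R : Type*} [CommRing R] [IsDomain R] [CharZero R]
    {p : R[X]} {r : R} (hr : r ≠ 0) (hp : taylor r p = p) : p = C (p.eval 0) := by
  have hper : Function.Periodic (fun x => p.eval x) r := fun x => by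
    simp only [← taylor_eval, hp]
  have hinj : Function.Injective fun n : ℕ => (n : R) * r :=
    fun m n hmn => Nat.cast_injective (mul_right_cancel₀ hr hmn)
  refine eq_of_infinite_eval_eq _ _ ((Set.infinite_range_of_injective hinj).mono ?_)
  rintro _ ⟨n, rfl⟩
  simpa only [Set.mem_ofPred_eq, eval_C] using hper.nat_mul_eq n

end Polynomial

noncomputable def boxAverages {ι : Type*} (h : ℝ) (a : ι → ℝ) : ℝ[X] →ₗ[ℝ] ι → ℝ where
  toFun p i := (1 / h) * ∫ x in (a i - h / 2)..(a i + h / 2), p.eval x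
  map_add' p q := funext fun i => by
    simp only [eval_add, Pi.add_apply, ← mul_add]
    rw [intervalIntegral.integral_add (p.continuous.intervalIntegrable _ _)
      (q.continuous.intervalIntegrable _ _)]
  map_smul' c p := funext fun i => by
    simp only [eval_smul, smul_eq_mul, intervalIntegral.integral_const_mul, RingHom.id_apply,
      Pi.smul_apply]
    ring

theorem eq_zero_of_forall_integral_eval_eq_zero {ι : Type*} [Fintype ι] {h : ℝ} (hh : h ≠ 0)
    {a : ι → ℝ} (ha : Function.Injective a) {p : ℝ[X]} (hp : p.degree < Fintype.card ι)
    (hz : ∀ i, ∫ x in (a i - h / 2)..(a i + h / 2), p.eval x = 0) : p = 0 := by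
  set A := p.antideriv
  have hA : derivative A = p := derivative_antideriv p
  by_contra hp0
  have hA0 : A.natDegree ≠ 0 := by rwa [← derivative_ne_zero, hA]
  have hpdeg : p.natDegree < Fintype.card ι := (natDegree_lt_iff_degree_lt hp0).mpr hp
  have hdiff : taylor (h / 2) A - taylor (-(h / 2)) A = 0 := by
    refine eq_zero_of_natDegree_lt_card_of_eval_eq_zero _ ha (fun i => ?_) ?_
    · simpa only [eval_sub, taylor_eval, integral_eval, ← sub_eq_add_neg] using hz i
    · have hlt := natDegree_taylor_sub_taylor_lt hA0 (h / 2) (-(h / 2))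
      have hAp : p.natDegree = A.natDegree - 1 := hA ▸ natDegree_derivative A
      omega
  have hper : taylor h A = A := by
    have := congrArg (taylor (h / 2)) (sub_eq_zero.mp hdiff)
    rwa [taylor_taylor, taylor_taylor, add_halves, add_neg_cancel, taylor_zero] at this
  exact hA0 (natDegree_eq_zero.mpr ⟨_, (eq_C_eval_zero_of_taylor_eq_self hh hper).symm⟩)

theorem boxAverages_domRestrict_bijective {n : ℕ} {h : ℝ} (hh : h ≠ 0) {a : Fin n → ℝ}
    (ha : Function.Injective a) :
    Function.Bijective ((boxAverages h a).domRestrict (degreeLT ℝ n)) := by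
  have hinj : Function.Injective ((boxAverages h a).domRestrict (degreeLT ℝ n)) := by
    refine LinearMap.ker_eq_bot.mp (LinearMap.ker_eq_bot'.mpr fun ⟨p, hp⟩ hp0 => ?_)
    refine Subtype.ext (eq_zero_of_forall_integral_eval_eq_zero hh ha ?_ fun i => ?_)
    · rwa [Fintype.card_fin, ← mem_degreeLT]
    · have := congrFun hp0 i
      simp only [LinearMap.domRestrict_apply, boxAverages, LinearMap.coe_mk, AddHom.coe_mk,
        Pi.zero_apply, mul_eq_zero, one_div, inv_eq_zero] at this
      exact this.resolve_left hh
  have := (degreeLTEquiv ℝ n).symm.finiteDimensional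
  refine ⟨hinj, (LinearMap.injective_iff_surjective_of_finrank_eq_finrank ?_).mp hinj⟩
  rw [(degreeLTEquiv ℝ n).finrank_eq, Module.finrank_fin_fun]

/-- Given `η + 1` pairwise distinct centers `a_i` and prescribed values `U_i`, there is a
unique polynomial `p` of degree at most `η` whose box averages over the teeth
`[a_i − h/2, a_i + h/2]` equal the `U_i`. -/
theorem stmt_4 (h : ℝ) (hh : 0 < h) (η : ℕ) (a : Fin (η + 1) → ℝ)
    (ha : Function.Injective a) (U : Fin (η + 1) → ℝ) :
    ∃! p : Polynomial ℝ, p.degree ≤ η ∧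
      ∀ i, (1 / h) * ∫ ξ in (a i - h / 2)..(a i + h / 2), p.eval ξ = U i := by
  have hdeg (p : ℝ[X]) : p.degree ≤ η ↔ p ∈ degreeLT ℝ (η + 1) := by
    rw [degreeLT_succ_eq_degreeLE, mem_degreeLE]
  obtain ⟨⟨p, hp⟩, hpU, huniq⟩ := (boxAverages_domRestrict_bijective hh.ne' ha).existsUnique U
  refine ⟨p, ⟨(hdeg p).2 hp, fun i => congrFun hpU i⟩, fun q ⟨hq, hqU⟩ => ?_⟩
  exact congrArg Subtype.val (huniq ⟨q, (hdeg q).1 hq⟩ (funext hqU))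
end

section
/- Let V be a vector space over ℝ, let S : V → V be a linear map, let τ > 0, let l ≥ 1, let k₁, …, k_l ∈ ℕ, and let t₁, …, t_l ∈ ℝ. Define the i-th meso step Φ_i : V → V by Φ_i(U) = S^{k_i}U + (t_i/τ)·(S^{k_i + 1}U − S^{k_i}U). Then the composite GPD type-I macro step Φ_l ∘ ⋯ ∘ Φ₂ ∘ Φ₁ equals the linear map S^{k} ∘ Π_{i=1}^{l} ( id + (t_i/τ)·(S − id) ), where k = k₁ + ⋯ + k_l. -/
/-!
Each meso step factors as `Φ_i = S^{k_i} (1 + (t_i/τ)(S - 1))`, so every factor on either side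
is a polynomial in `S`. Evaluation at `S` is an algebra map out of the commutative ring `ℝ[X]`,
where the order of the factors is irrelevant and the powers of `X` collect into `X ^ (∑ k_i)`.
-/

open Polynomial

section Evaluation

variable {R A : Type*} [CommRing R] [Ring A] [Algebra R A]

theorem aeval_one_add_C_mul_X_sub_one (a : A) (c : R) :
    aeval a (1 + C c * (X - 1)) = 1 + c • (a - 1) := by
  simp [Algebra.smul_def]

theorem aeval_X_pow_mul_one_add_C_mul_X_sub_one (a : A) (k : ℕ) (c : R) :
    aeval a (X ^ k * (1 + C c * (X - 1))) = a ^ k + c • (a ^ (k + 1) - a ^ k) := by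
  rw [map_mul, map_pow, aeval_X, aeval_one_add_C_mul_X_sub_one, mul_add, mul_one,
    mul_smul_comm, mul_sub, mul_one, ← pow_succ]

theorem list_prod_ofFn_aeval (a : A) {n : ℕ} (p : Fin n → R[X]) :
    (List.ofFn fun i => aeval a (p i)).prod = aeval a (∏ i, p i) := by
  rw [← List.prod_ofFn, map_list_prod, List.map_ofFn, Function.comp_def]

theorem list_prod_reverse_ofFn_aeval (a : A) {n : ℕ} (p : Fin n → R[X]) :
    (List.ofFn fun i => aeval a (p i)).reverse.prod = aeval a (∏ i, p i) := by
  rw [← List.prod_ofFn, ← List.prod_reverse (xs := List.ofFn p), map_list_prod, List.map_reverse,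
    List.map_ofFn, Function.comp_def]

end Evaluation

theorem stmt_6_general {V : Type*} [AddCommGroup V] [Module ℝ V]
    (S : Module.End ℝ V) (τ : ℝ)
    (l : ℕ) (k : Fin l → ℕ) (t : Fin l → ℝ)
    (Φ : Fin l → Module.End ℝ V)
    (hΦ : ∀ i, Φ i = S ^ (k i) + (t i / τ) • (S ^ (k i + 1) - S ^ (k i))) :
    ((List.ofFn Φ).reverse).prod
      = S ^ (∑ i, k i)
        * ((List.ofFn fun i => (1 : Module.End ℝ V) + (t i / τ) • (S - 1))).prod := by
  set g : Fin l → ℝ[X] := fun i => 1 + C (t i / τ) * (X - 1)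
  have hΦ_aeval : Φ = fun i => aeval S (X ^ k i * g i) := by
    funext i
    rw [hΦ, aeval_X_pow_mul_one_add_C_mul_X_sub_one]
  simp only [← aeval_one_add_C_mul_X_sub_one S (t _ / τ)]
  rw [hΦ_aeval, list_prod_reverse_ofFn_aeval, list_prod_ofFn_aeval, Finset.prod_mul_distrib,
    Finset.prod_pow_eq_pow_sum, map_mul, map_pow, aeval_X]

/-- For a linear gap-tooth timestepper `S`, the composite GPD type-I macro step
`Φ_l ∘ ⋯ ∘ Φ₁`, where `Φ_i U = S^{k_i} U + (t_i/τ)·(S^{k_i+1} U − S^{k_i} U)`,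
equals `S^K ∘ Π_{i=1}^{l} (id + (t_i/τ)·(S − id))` with `K = k₁ + ⋯ + k_l`. -/
theorem stmt_6 {V : Type*} [AddCommGroup V] [Module ℝ V]
    (S : Module.End ℝ V) (τ : ℝ) (hτ : 0 < τ)
    (l : ℕ) (hl : 1 ≤ l) (k : Fin l → ℕ) (t : Fin l → ℝ)
    (Φ : Fin l → Module.End ℝ V)
    (hΦ : ∀ i, Φ i = S ^ (k i) + (t i / τ) • (S ^ (k i + 1) - S ^ (k i))) :
    ((List.ofFn Φ).reverse).prod
      = S ^ (∑ i, k i)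
        * ((List.ofFn fun i => (1 : Module.End ℝ V) + (t i / τ) • (S - 1))).prod :=
  stmt_6_general S τ l k t Φ hΦ
end

section
/- Let V be a vector space over ℝ, let S : V → V be a linear map, let τ > 0, and let t₁, …, t_m ∈ ℝ be extrapolation times. For any l, any k₁, …, k_l ∈ ℕ, and any assignment interleaving the groups of S-applications with the m forward-Euler extrapolations (each extrapolation of length t_i given by U ↦ S^{k}U + (t_i/τ)(S^{k+1}U − S^{k}U) applied after its group of timesteppers, in either GPD type-I or GPD type-II ordering), the resulting composite macro step equals S^{K} ∘ Π_{i=1}^{m} ( id + (t_i/τ)·(S − id) ), where K = k₁ + ⋯ + k_l. Consequently, when the microsimulator is linear, the macro update depends only on the total number K of gap-tooth timesteppers and on the multiset of extrapolation times {t₁, …, t_m}, and not on how the timesteppers are grouped or on the ordering of groups and extrapolations; in particular, the GPD type-I scheme with l groups and extrapolation times t₁, …, t_l gives the same result as the GPD type-II scheme with l + 1 groups (same total K) and the same extrapolation times. -/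
/-- A step of a generalized patch dynamics macro step: `.inl k` is a bare group of `k`
gap-tooth timesteppers, while `.inr (k, t)` is a group of `k` gap-tooth timesteppers
followed by a forward-Euler extrapolation of length `t`. -/
noncomputable def gpdStepEnd {V : Type*} [AddCommGroup V] [Module ℝ V]
    (S : Module.End ℝ V) (τ : ℝ) : ℕ ⊕ (ℕ × ℝ) → Module.End ℝ V
  | .inl k => S ^ k
  | .inr (k, t) => S ^ k + (t / τ) • (S ^ (k + 1) - S ^ k)

/-- The number of gap-tooth timesteppers in a step. -/
def gpdStepCount : ℕ ⊕ (ℕ × ℝ) → ℕ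
  | .inl k => k
  | .inr (k, _) => k

/-- The extrapolation times occurring in a list of steps, in order. -/
def gpdStepTimes : List (ℕ ⊕ (ℕ × ℝ)) → List ℝ :=
  List.filterMap fun s => match s with | .inl _ => none | .inr (_, t) => some t

/-!
Every step is a polynomial in `S`, so the composite macro step is the image under
`Polynomial.aeval S` of a product in the commutative ring `ℝ[X]`. There the order of the
factors is irrelevant, and factoring `X ^ k` out of each extrapolation step
`X ^ k + c (X ^ (k + 1) - X ^ k) = X ^ k (1 + c (X - 1))` collects all timesteppers into
`X ^ K` and leaves one factor `1 + (tᵢ / τ)(X - 1)` per extrapolation time.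
-/

open Polynomial

noncomputable def extrapolationPoly (c : ℝ) : ℝ[X] := 1 + C c * (X - 1)

noncomputable def gpdStepPoly (τ : ℝ) : ℕ ⊕ (ℕ × ℝ) → ℝ[X]
  | .inl k => X ^ k
  | .inr (k, t) => X ^ k * extrapolationPoly (t / τ)

lemma aeval_extrapolationPoly {A : Type*} [Ring A] [Algebra ℝ A] (a : A) (c : ℝ) :
    aeval a (extrapolationPoly c) = 1 + c • (a - 1) := by
  simp [extrapolationPoly, Algebra.smul_def]

section Aeval

variable {V : Type*} [AddCommGroup V] [Module ℝ V] (S : Module.End ℝ V)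

lemma aeval_gpdStepPoly (τ : ℝ) (s : ℕ ⊕ (ℕ × ℝ)) :
    aeval S (gpdStepPoly τ s) = gpdStepEnd S τ s := by
  rcases s with k | ⟨k, t⟩
  · simp [gpdStepPoly, gpdStepEnd]
  · rw [gpdStepPoly, gpdStepEnd, map_mul, aeval_extrapolationPoly, map_pow, aeval_X,
      mul_add, mul_one, mul_smul_comm, mul_sub, mul_one, ← pow_succ]

lemma prod_reverse_map_gpdStepEnd (τ : ℝ) (steps : List (ℕ ⊕ (ℕ × ℝ))) :
    ((steps.map (gpdStepEnd S τ)).reverse).prod = aeval S (steps.map (gpdStepPoly τ)).prod := by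
  have hsteps : steps.map (gpdStepEnd S τ) = (steps.map (gpdStepPoly τ)).map (aeval S) := by
    simp only [List.map_map, Function.comp_def, aeval_gpdStepPoly]
  rw [hsteps, ← List.map_reverse, ← map_list_prod, List.prod_reverse]

end Aeval

lemma prod_map_gpdStepPoly (τ : ℝ) (steps : List (ℕ ⊕ (ℕ × ℝ))) :
    (steps.map (gpdStepPoly τ)).prod
      = X ^ (steps.map gpdStepCount).sum
        * ((gpdStepTimes steps).map fun t => extrapolationPoly (t / τ)).prod := by
  induction steps with
  | nil => simp [gpdStepTimes]
  | cons s steps ih =>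
    rcases s with k | ⟨k, t⟩ <;>
    simp only [gpdStepTimes, List.map_cons, List.filterMap_cons, List.prod_cons, List.sum_cons,
      gpdStepPoly, gpdStepCount, pow_add] at ih ⊢ <;>
    rw [ih] <;> ring

theorem stmt_8_general {V : Type*} [AddCommGroup V] [Module ℝ V]
    (S : Module.End ℝ V) (τ : ℝ)
    (m : ℕ) (t : Fin m → ℝ)
    (steps : List (ℕ ⊕ (ℕ × ℝ)))
    (htimes : (↑(gpdStepTimes steps) : Multiset ℝ) = ↑(List.ofFn t))
    (K : ℕ) (hK : (steps.map gpdStepCount).sum = K) :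
    ((steps.map (gpdStepEnd S τ)).reverse).prod
      = S ^ K * ((List.ofFn fun i => (1 : Module.End ℝ V) + (t i / τ) • (S - 1))).prod := by
  have hperm : (gpdStepTimes steps).Perm (List.ofFn t) := Multiset.coe_eq_coe.mp htimes
  rw [prod_reverse_map_gpdStepEnd, prod_map_gpdStepPoly, hK, (hperm.map _).prod_eq, map_mul,
    map_pow, aeval_X, map_list_prod, List.map_map, List.map_ofFn]
  simp [Function.comp_def, aeval_extrapolationPoly]

/-- For a linear gap-tooth timestepper `S`, any interleaving of groups of timesteppers
with the `m` forward-Euler extrapolations of lengths `t₁, …, t_m` (each extrapolation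
`U ↦ S^k U + (t_i/τ)(S^{k+1} U − S^k U)` applied after its group of timesteppers, covering
both the GPD type-I and GPD type-II orderings) yields the composite macro step
`S^K ∘ Π_{i=1}^{m} (id + (t_i/τ)·(S − id))`, where `K` is the total number of
timesteppers; hence the macro update depends only on `K` and on the multiset of
extrapolation times. -/
theorem stmt_8 {V : Type*} [AddCommGroup V] [Module ℝ V]
    (S : Module.End ℝ V) (τ : ℝ) (hτ : 0 < τ)
    (m : ℕ) (t : Fin m → ℝ)
    (steps : List (ℕ ⊕ (ℕ × ℝ)))
    (htimes : (↑(gpdStepTimes steps) : Multiset ℝ) = ↑(List.ofFn t))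
    (K : ℕ) (hK : (steps.map gpdStepCount).sum = K) :
    ((steps.map (gpdStepEnd S τ)).reverse).prod
      = S ^ K * ((List.ofFn fun i => (1 : Module.End ℝ V) + (t i / τ) • (S - 1))).prod :=
  stmt_8_general S τ m t steps htimes K hK
end
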